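/- Let E be a finite-dimensional real vector space and π₀ : E* → E a skew-symmetric linear map. Define V = { (λ,φ) ∈ W(E) : λ(u) = λ(0) − π₀(∫₀ᵘ φ(s) ds) for all u ∈ [0,1] }. Then V^⊥ ⊆ V; that is, V is a coisotropic subspace of (W(E), Ω). -/

import Mathlib

open MeasureTheory Set

/-- An element of `W(E)`: a pair `(λ, φ)` of continuous maps on `[0,1]` with values in `E`
and in the dual `E* = E →L[ℝ] ℝ` respectively. -/
structure WPair (E : Type*) [NormedAddCommGroup E] [NormedSpace ℝ E] where
  lam : ℝ → E
  phi : ℝ → E →L[ℝ] ℝ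
  lam_cont : ContinuousOn lam (Icc 0 1)
  phi_cont : ContinuousOn phi (Icc 0 1)

/-- The alternating bilinear form `Ω((λ,φ),(λ',φ')) = ∫₀¹ (φ(u)(λ'(u)) − φ'(u)(λ(u))) du`. -/
noncomputable def Omega {E : Type*} [NormedAddCommGroup E] [NormedSpace ℝ E]
    (w w' : WPair E) : ℝ :=
  ∫ u in (0:ℝ)..(1:ℝ), (w.phi u (w'.lam u) - w'.phi u (w.lam u))

/-- The `Ω`-orthogonal of a subset of `W(E)`. -/
def orth {E : Type*} [NormedAddCommGroup E] [NormedSpace ℝ E] (A : Set (WPair E)) :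
    Set (WPair E) :=
  {w | ∀ a ∈ A, Omega a w = 0}

/-!
Testing `w ∈ V^⊥` against the constant pairs `(x, 0) ∈ V` gives `∫₀¹ φ = 0`. Testing it against
`(-π₀ ∫₀ᵘ ψ, ψ) ∈ V` for an arbitrary continuous `ψ` and integrating `u ↦ (∫₀ᵘ ψ)(π₀ ∫₀ᵘ φ)` by
parts, which is where skew-symmetry enters, gives `∫₀¹ ψ(u)(λ(u) + π₀ ∫₀ᵘ φ) du = 0`. Since
continuous functionals separate points, `λ(u) = -π₀ ∫₀ᵘ φ` on `[0,1]`; in particular `λ(0) = 0`.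
-/

section Primitive

variable {F : Type*} [NormedAddCommGroup F] [NormedSpace ℝ F]
  {f : ℝ → F} {a b : ℝ}

lemma ContinuousOn.hasDerivAt_primitive [CompleteSpace F] (hf : ContinuousOn f (Icc a b)) {x : ℝ}
    (hx : x ∈ Ioo a b) : HasDerivAt (fun u => ∫ s in a..u, f s) (f x) x :=
  intervalIntegral.integral_hasDerivAt_right
    ((hf.mono (Icc_subset_Icc_right hx.2.le)).intervalIntegrable_of_Icc hx.1.le)
    ((hf.mono Ioo_subset_Icc_self).stronglyMeasurableAtFilter isOpen_Ioo x hx)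
    (hf.continuousAt (Icc_mem_nhds hx.1 hx.2))

lemma ContinuousOn.continuousOn_primitive (hf : ContinuousOn f (Icc a b)) (hab : a ≤ b) :
    ContinuousOn (fun u => ∫ s in a..u, f s) (Icc a b) := by
  rw [← uIcc_of_le hab] at hf ⊢
  exact intervalIntegral.continuousOn_primitive_interval hf.integrableOn_uIcc

end Primitive

section Coisotropic

variable {E : Type*} [NormedAddCommGroup E] [NormedSpace ℝ E]

lemma eqOn_zero_of_forall_integral_apply_eq_zero {g : ℝ → E} {a b : ℝ} (hab : a < b)
    (hg : ContinuousOn g (Icc a b))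
    (h : ∀ ψ : ℝ → E →L[ℝ] ℝ, ContinuousOn ψ (Icc a b) → ∫ u in a..b, ψ u (g u) = 0) :
    EqOn g 0 (Icc a b) := by
  intro c hc
  refine SeparatingDual.eq_zero_of_forall_dual_eq_zero (R := ℝ) fun α => ?_
  have hαg : ContinuousOn (fun u => α (g u)) (Icc a b) := α.continuous.comp_continuousOn hg
  have hsq : ∫ u in a..b, α (g u) * α (g u) = 0 := by
    simpa using h (fun u => α (g u) • α) (hαg.smul continuousOn_const)
  by_contra hne
  have := intervalIntegral.integral_pos hab (hαg.mul hαg) (fun x _ => mul_self_nonneg _)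
    ⟨c, hc, mul_self_pos.2 hne⟩
  exact this.ne' hsq

lemma integral_apply_skew_primitive_sub {π : (E →L[ℝ] ℝ) →L[ℝ] E}
    (hπ : ∀ α β : E →L[ℝ] ℝ, α (π β) = -β (π α)) {ψ φ : ℝ → E →L[ℝ] ℝ} {a b : ℝ}
    (hab : a ≤ b) (hψ : ContinuousOn ψ (Icc a b)) (hφ : ContinuousOn φ (Icc a b)) :
    ∫ u in a..b, (ψ u (π (∫ s in a..u, φ s)) - φ u (π (∫ s in a..u, ψ s))) =
      (∫ s in a..b, ψ s) (π (∫ s in a..b, φ s)) := by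
  set Ψ := fun u => ∫ s in a..u, ψ s
  set Φ := fun u => ∫ s in a..u, φ s
  have hΨ := hψ.continuousOn_primitive hab
  have hΦ : ContinuousOn (fun u => π (Φ u)) (Icc a b) :=
    π.continuous.comp_continuousOn (hφ.continuousOn_primitive hab)
  have hderiv : ∀ x ∈ Ioo a b, HasDerivAt (fun u => Ψ u (π (Φ u)))
      (ψ x (π (Φ x)) - φ x (π (Ψ x))) x := by
    intro x hx
    have h := (hψ.hasDerivAt_primitive hx).clm_apply
      (π.hasFDerivAt.comp_hasDerivAt x (hφ.hasDerivAt_primitive hx))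
    rwa [hπ (Ψ x), ← sub_eq_add_neg] at h
  have hint : IntervalIntegrable (fun u => ψ u (π (Φ u)) - φ u (π (Ψ u))) volume a b :=
    ((hψ.clm_apply hΦ).sub
      (hφ.clm_apply (π.continuous.comp_continuousOn hΨ))).intervalIntegrable_of_Icc hab
  rw [intervalIntegral.integral_eq_sub_of_hasDerivAt_of_le hab (hΨ.clm_apply hΦ) hderiv hint]
  simp only [Φ, intervalIntegral.integral_same, zero_apply, sub_zero]

def solutionSet (π : (E →L[ℝ] ℝ) →L[ℝ] E) : Set (WPair E) :=
  {w | ∀ u ∈ Icc (0:ℝ) 1, w.lam u = w.lam 0 - π (∫ s in (0:ℝ)..u, w.phi s)}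

def WPair.const (x : E) : WPair E := ⟨fun _ => x, 0, continuousOn_const, continuousOn_const⟩

noncomputable def WPair.ofCovector (π : (E →L[ℝ] ℝ) →L[ℝ] E) {ψ : ℝ → E →L[ℝ] ℝ}
    (hψ : ContinuousOn ψ (Icc 0 1)) : WPair E :=
  ⟨fun u => -π (∫ s in (0:ℝ)..u, ψ s), ψ,
    π.continuous.neg.comp_continuousOn (hψ.continuousOn_primitive zero_le_one), hψ⟩

variable {π : (E →L[ℝ] ℝ) →L[ℝ] E}

lemma WPair.const_mem_solutionSet (x : E) : WPair.const x ∈ solutionSet π := by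
  intro u _
  simp [WPair.const]

lemma WPair.ofCovector_mem_solutionSet {ψ : ℝ → E →L[ℝ] ℝ} (hψ : ContinuousOn ψ (Icc 0 1)) :
    WPair.ofCovector π hψ ∈ solutionSet π := by
  intro u _
  simp [WPair.ofCovector]

lemma integral_phi_eq_zero_of_mem_orth {w : WPair E} (hw : w ∈ orth (solutionSet π)) :
    ∫ u in (0:ℝ)..1, w.phi u = 0 := by
  ext x
  have h := hw _ (WPair.const_mem_solutionSet x)
  rw [ContinuousLinearMap.intervalIntegral_apply
    (w.phi_cont.intervalIntegrable_of_Icc zero_le_one)]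
  simpa [Omega, WPair.const] using h

lemma integral_apply_lam_add_eq_zero_of_mem_orth (hπ : ∀ α β : E →L[ℝ] ℝ, α (π β) = -β (π α))
    {w : WPair E} (hw : w ∈ orth (solutionSet π)) {ψ : ℝ → E →L[ℝ] ℝ}
    (hψ : ContinuousOn ψ (Icc 0 1)) :
    ∫ u in (0:ℝ)..1, ψ u (w.lam u + π (∫ s in (0:ℝ)..u, w.phi s)) = 0 := by
  set a := WPair.ofCovector π hψ
  have hΩ : Omega a w = 0 := hw _ (WPair.ofCovector_mem_solutionSet hψ)
  have hparts := integral_apply_skew_primitive_sub hπ zero_le_one hψ w.phi_cont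
  rw [integral_phi_eq_zero_of_mem_orth hw, map_zero, map_zero] at hparts
  have hΩint : IntervalIntegrable (fun u => a.phi u (w.lam u) - w.phi u (a.lam u)) volume 0 1 :=
    ((a.phi_cont.clm_apply w.lam_cont).sub
      (w.phi_cont.clm_apply a.lam_cont)).intervalIntegrable_of_Icc zero_le_one
  have hπΦ : ContinuousOn (fun u => π (∫ s in (0:ℝ)..u, w.phi s)) (Icc 0 1) :=
    π.continuous.comp_continuousOn (w.phi_cont.continuousOn_primitive zero_le_one)
  have hπΨ : ContinuousOn (fun u => π (∫ s in (0:ℝ)..u, ψ s)) (Icc 0 1) :=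
    π.continuous.comp_continuousOn (hψ.continuousOn_primitive zero_le_one)
  have hpartsint : IntervalIntegrable (fun u => ψ u (π (∫ s in (0:ℝ)..u, w.phi s)) -
      w.phi u (π (∫ s in (0:ℝ)..u, ψ s))) volume 0 1 :=
    ((hψ.clm_apply hπΦ).sub (w.phi_cont.clm_apply hπΨ)).intervalIntegrable_of_Icc zero_le_one
  calc ∫ u in (0:ℝ)..1, ψ u (w.lam u + π (∫ s in (0:ℝ)..u, w.phi s))
      = ∫ u in (0:ℝ)..1, ((a.phi u (w.lam u) - w.phi u (a.lam u)) +
          (ψ u (π (∫ s in (0:ℝ)..u, w.phi s)) - w.phi u (π (∫ s in (0:ℝ)..u, ψ s)))) := by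
        congr 1 with u
        simp only [a, WPair.ofCovector, map_add, map_neg]
        ring
    _ = Omega a w + 0 := by rw [intervalIntegral.integral_add hΩint hpartsint, hparts]; rfl
    _ = 0 := by rw [hΩ, add_zero]

theorem orth_solutionSet_subset (hπ : ∀ α β : E →L[ℝ] ℝ, α (π β) = -β (π α)) :
    orth (solutionSet π) ⊆ solutionSet π := by
  intro w hw u hu
  have hg : EqOn (fun u => w.lam u + π (∫ s in (0:ℝ)..u, w.phi s)) 0 (Icc 0 1) :=
    eqOn_zero_of_forall_integral_apply_eq_zero zero_lt_one
      (w.lam_cont.add (π.continuous.comp_continuousOn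
        (w.phi_cont.continuousOn_primitive zero_le_one)))
      fun ψ hψ => integral_apply_lam_add_eq_zero_of_mem_orth hπ hw hψ
  have hg0 : w.lam 0 = 0 := by
    simpa using hg (left_mem_Icc.2 zero_le_one)
  rw [hg0, zero_sub]
  exact eq_neg_of_add_eq_zero_left (hg hu)

end Coisotropic

theorem coisotropic_of_skew
    (E : Type*) [NormedAddCommGroup E] [NormedSpace ℝ E] [FiniteDimensional ℝ E]
    (π₀ : (E →L[ℝ] ℝ) →ₗ[ℝ] E)
    (hskew : ∀ α β : E →L[ℝ] ℝ, α (π₀ β) = - β (π₀ α)) :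
    orth {w : WPair E |
        ∀ u ∈ Icc (0:ℝ) 1, w.lam u = w.lam 0 - π₀ (∫ s in (0:ℝ)..u, w.phi s)} ⊆
      {w : WPair E |
        ∀ u ∈ Icc (0:ℝ) 1, w.lam u = w.lam 0 - π₀ (∫ s in (0:ℝ)..u, w.phi s)} :=
  orth_solutionSet_subset (π := LinearMap.toContinuousLinearMap π₀) hskew
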